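/- For any trajectory of the simple counter of dimension N started at time 0 (so that mode(0) = switch), the state at time N satisfies α(s(N)) = α(s(0)) + 1 modulo 2^N. -/

import Mathlib

/-!
Write `b t` for the bit in the first cell at time `t`. During the first `N` steps the register
shifts down, so `b 0, …, b (N-1)` are the bits of `s(0)` in order and `s(N)_i` is the bit written
into the last cell at time `i + 1`. The mode stays `switch` exactly as long as only ones have been
read, i.e. `mode(t) = switch` iff `b 0 = ⋯ = b (t-1) = 1`, which is the carry into position `t`
when adding `1`. So the last cell receives `b t xor carry t`: the counter performs ripple-carry
addition of `1`, one bit per step.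
-/

inductive Mode : Type
  | rotate : Mode
  | switch : Mode
deriving DecidableEq

def succCarry (b : ℕ → Bool) : ℕ → Bool
  | 0 => true
  | i + 1 => succCarry b i && b i

open Finset in
theorem sum_range_xor_succCarry (b : ℕ → Bool) (n : ℕ) :
    ∑ i ∈ range n, (xor (b i) (succCarry b i)).toNat * 2 ^ i + (succCarry b n).toNat * 2 ^ n
      = ∑ i ∈ range n, (b i).toNat * 2 ^ i + 1 := by
  induction n with
  | zero => simp [succCarry]
  | succ n ih =>
    have half_adder : (xor (b n) (succCarry b n)).toNat * 2 ^ n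
        + (succCarry b n && b n).toNat * 2 ^ (n + 1)
        = (b n).toNat * 2 ^ n + (succCarry b n).toNat * 2 ^ n := by
      cases b n <;> cases succCarry b n <;> simp [pow_succ, mul_two]
    simp only [sum_range_succ, succCarry]
    omega

open Finset in
theorem sum_range_xor_succCarry_mod (b : ℕ → Bool) (n : ℕ) :
    (∑ i ∈ range n, (xor (b i) (succCarry b i)).toNat * 2 ^ i) % 2 ^ n
      = (∑ i ∈ range n, (b i).toNat * 2 ^ i + 1) % 2 ^ n := by
  rw [← sum_range_xor_succCarry, Nat.add_mul_mod_self_right]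

theorem shift_add {α : Type*} {N : ℕ} {s : ℕ → Fin N → α}
    (hshift : ∀ (t : ℕ) (i : Fin N) (h : (i : ℕ) + 1 < N), s (t + 1) i = s t ⟨(i : ℕ) + 1, h⟩)
    (t d : ℕ) (i j : Fin N) (hij : (j : ℕ) = i + d) : s (t + d) i = s t j := by
  induction d generalizing t j with
  | zero => simp [Fin.ext hij]
  | succ d ih =>
    rw [← add_assoc, add_right_comm, ih (t + 1) ⟨i + d, by omega⟩ rfl, hshift _ _ (by simp; omega)]
    exact congrArg (s t) (Fin.ext hij.symm)

theorem mode_eq_switch_iff_succCarry {N : ℕ} (b : ℕ → Bool) (mode : ℕ → Mode)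
    (hmode0 : mode 0 = Mode.switch)
    (hmode : ∀ t : ℕ, t + 1 < N → mode (t + 1) = (if b t = true then mode t else Mode.rotate))
    (t : ℕ) (ht : t < N) : mode t = Mode.switch ↔ succCarry b t = true := by
  induction t with
  | zero => simp [hmode0, succCarry]
  | succ t ih =>
    rw [hmode t ht, succCarry, Bool.and_eq_true, ← ih (by omega)]
    cases b t <;> simp

/-- Coordinates are `0`-indexed: coordinate `i` corresponds to `s_{i+1}` of the paper. -/
theorem stmt1 (N : ℕ) (hN : 0 < N)
    (s : ℕ → Fin N → Bool) (mode : ℕ → Mode)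
    -- s_i(t) = s_{i+1}(t-1) for i = 1, ..., N-1
    (hshift : ∀ (t : ℕ) (i : Fin N) (h : (i : ℕ) + 1 < N),
      s (t + 1) i = s t ⟨(i : ℕ) + 1, h⟩)
    -- s_N(t) = γ(s_1(t-1), mode(t-1)), where γ(x, rotate) = x, γ(x, switch) = ¬x
    (hlast : ∀ t : ℕ, s (t + 1) ⟨N - 1, Nat.sub_lt hN one_pos⟩ =
      (if mode t = Mode.switch then !(s t ⟨0, hN⟩) else s t ⟨0, hN⟩))
    -- mode(t) = switch whenever t is a multiple of N
    (hmodeN : ∀ t : ℕ, N ∣ t → mode t = Mode.switch)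
    -- otherwise mode(t) = mode(t-1) if s_1(t-1) = 1, and mode(t) = rotate if s_1(t-1) = 0
    (hmode : ∀ t : ℕ, ¬ N ∣ (t + 1) →
      mode (t + 1) = (if s t ⟨0, hN⟩ = true then mode t else Mode.rotate)) :
    (∑ i : Fin N, (s N i).toNat * 2 ^ (i : ℕ)) % 2 ^ N
      = ((∑ i : Fin N, (s 0 i).toNat * 2 ^ (i : ℕ)) + 1) % 2 ^ N := by
  set b : ℕ → Bool := fun t => s t ⟨0, hN⟩
  have hcarry (t : ℕ) (ht : t < N) : mode t = Mode.switch ↔ succCarry b t = true :=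
    mode_eq_switch_iff_succCarry b mode (hmodeN 0 (dvd_zero N))
      (fun t ht => hmode t (Nat.not_dvd_of_pos_of_lt t.succ_pos ht)) t ht
  have hinit (i : Fin N) : s 0 i = b i := by
    simpa using (shift_add hshift 0 i ⟨0, hN⟩ i (by simp)).symm
  have hfinal (i : Fin N) : s N i = xor (b i) (succCarry b i) := by
    have hlast_cell := shift_add hshift (i + 1) (N - 1 - i) i ⟨N - 1, by omega⟩ (by simp; omega)
    rw [show (i : ℕ) + 1 + (N - 1 - i) = N by omega] at hlast_cell
    rw [hlast_cell, hlast, if_congr (hcarry i i.isLt) rfl rfl]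
    change (if _ then !b i else b i) = _
    cases b i <;> cases succCarry b i <;> rfl
  simp only [hinit, hfinal]
  rw [Fin.sum_univ_eq_sum_range (fun i => (xor (b i) (succCarry b i)).toNat * 2 ^ i),
    Fin.sum_univ_eq_sum_range (fun i => (b i).toNat * 2 ^ i)]
  exact sum_range_xor_succCarry_mod b N
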